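/- In Minkowski space, if x ≪ y and y → z (i.e., z ≠ y lies on the future light cone of y), then x ≪ z. -/
import Mathlib

noncomputable section

abbrev M := EuclideanSpace ℝ (Fin 4)

def Q (v : M) : ℝ := v 0 ^ 2 - v 1 ^ 2 - v 2 ^ 2 - v 3 ^ 2

def chron (x y : M) : Prop := Q (y - x) > 0 ∧ y 0 > x 0

def horismos (y z : M) : Prop := z ≠ y ∧ Q (z - y) = 0 ∧ z 0 ≥ y 0

lemma key (a0 a1 a2 a3 b0 b1 b2 b3 : ℝ)
    (ha : a0 ^ 2 - a1 ^ 2 - a2 ^ 2 - a3 ^ 2 > 0) (ha0 : a0 > 0)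
    (hb : b0 ^ 2 - b1 ^ 2 - b2 ^ 2 - b3 ^ 2 = 0) (hb0 : b0 ≥ 0) :
    (a0 + b0) ^ 2 - (a1 + b1) ^ 2 - (a2 + b2) ^ 2 - (a3 + b3) ^ 2 > 0 := by
  nlinarith [sq_nonneg (a1*b2 - a2*b1), sq_nonneg (a1*b3 - a3*b1), sq_nonneg (a2*b3 - a3*b2),
    sq_nonneg (a0*b0 - a1*b1 - a2*b2 - a3*b3), mul_nonneg ha0.le hb0, mul_pos ha0 ha0, sq_nonneg b0]

theorem chron_horismos_chron (x y z : M) (h1 : chron x y) (h2 : horismos y z) :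
    chron x z := by
  obtain ⟨hQ1, ht1⟩ := h1
  obtain ⟨_, hQ2, ht2⟩ := h2
  simp only [Q, chron, PiLp.sub_apply] at *
  constructor
  · have := key (y 0 - x 0) (y 1 - x 1) (y 2 - x 2) (y 3 - x 3)
      (z 0 - y 0) (z 1 - y 1) (z 2 - y 2) (z 3 - y 3) hQ1 (by linarith) hQ2 (by linarith)
    have e : ∀ i : Fin 4, z i - x i = (y i - x i) + (z i - y i) := fun i => by ring
    rw [e 0, e 1, e 2, e 3]
    exact this
  · linarith
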